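/- arXiv:hep-th/9504103 — 6 statements merged into one kernel-verified Lean document; each statement's English description precedes it below -/
import Mathlib

section
/- Let G be a compact Hausdorff topological group with Haar probability measure, let (ρ_σ, V_σ), (ρ_μ, V_μ), (ρ_ν, V_ν) be continuous irreducible finite-dimensional unitary representations of G with characters χ_σ, χ_μ, χ_ν and dimensions d_σ, d_μ, d_ν, and let u be an element of the center of G. Then for every integer g ≥ 1: ∫_{G^{2g+1}} χ_σ(x̄) · χ_μ(x̄) · χ_ν(x̄⁻¹ · (∏_{i=1}^{g} x_i y_i x_i⁻¹ y_i⁻¹) · u⁻¹) dx̄ dx_1 dy_1 ⋯ dx_g dy_g = D · χ_ν(u⁻¹)/d_ν^{2g+1}, where D = ∫_G χ_σ(x)·χ_μ(x)·χ_ν(x⁻¹) dx (the Clebsch–Gordan coefficient D_{σμν}). -/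
/-!
Averaging `ρ s * B * ρ s⁻¹` over the Haar measure gives an operator commuting with the
irreducible representation `ρ`, hence by Schur's lemma the scalar `(tr B / d) • 1`. Applied to a
commutator this gives `∫ ρ (x y x⁻¹ y⁻¹) dy = (χ(x⁻¹) / d) • ρ x`, and applied to rank-one
operators it gives the orthogonality relation `∫ χ(x⁻¹) • ρ x dx = d⁻¹ • 1`. The Haar integral
over `G^g` of an ordered product of factors depending on distinct coordinates is the ordered
product of their integrals, so the product of the `g` commutators averages to `d^(-2g) • 1`.
Finally the central element `u` acts by the scalar `χ(u) / d`, and the remaining integral over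
`x̄` is `D`.
-/

open MeasureTheory

namespace WilsonLine

theorem map_inv_mul_cancel {G M : Type*} [Group G] [Monoid M] (f : G →* M) (s : G) :
    f s⁻¹ * f s = 1 := by
  rw [← map_mul, inv_mul_cancel, map_one]

theorem _root_.Continuous.integrable_of_compactSpace {X E : Type*} [TopologicalSpace X]
    [CompactSpace X] [MeasurableSpace X] [OpensMeasurableSpace X] {μ : Measure X}
    [IsFiniteMeasure μ] [NormedAddCommGroup E] {f : X → E} (hf : Continuous f) :
    Integrable f μ :=
  hf.integrable_of_hasCompactSupport (HasCompactSupport.of_compactSpace f)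

section OrderedProduct

variable {X A : Type*} [TopologicalSpace X] [CompactSpace X] [MeasurableSpace X]
  [OpensMeasurableSpace X] {μ : Measure X} [IsProbabilityMeasure μ]
  [NormedRing A]

theorem integrable_list_ofFn_prod {n : ℕ} {f : Fin n → X → A} (hf : ∀ i, Continuous (f i)) :
    Integrable (fun y : Fin n → X => (List.ofFn fun i => f i (y i)).prod)
      (Measure.pi fun _ => μ) := by
  have hcont : Continuous fun y : Fin n → X => (List.ofFn fun i => f i (y i)).prod := by
    simp only [List.ofFn_eq_map]
    exact continuous_list_prod _ fun i _ => (hf i).comp (continuous_apply i)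
  obtain ⟨C, hC⟩ := isCompact_univ.exists_bound_of_continuousOn hcont.continuousOn
  refine Integrable.of_bound ?_ C (Filter.Eventually.of_forall fun y => hC y trivial)
  -- `Fin n → X` carries the product σ-algebra, which need not be Borel: measurability has to
  -- come from the coordinates.
  have hprod : (fun y : Fin n → X => (List.ofFn fun i => f i (y i)).prod)
      = (List.ofFn fun i (y : Fin n → X) => f i (y i)).prod := by
    funext y
    rw [Pi.list_prod_apply, List.map_ofFn]
    rfl
  rw [hprod]
  refine List.aestronglyMeasurable_prod _ fun g hg => ?_
  obtain ⟨i, rfl⟩ := List.mem_ofFn.mp hg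
  exact (hf i).aestronglyMeasurable_of_compactSpace.comp_quasiMeasurePreserving
    (measurePreserving_eval _ i).quasiMeasurePreserving

theorem integral_list_ofFn_prod [NormedAlgebra ℝ A] [CompleteSpace A] {n : ℕ}
    {f : Fin n → X → A} (hf : ∀ i, Continuous (f i)) :
    ∫ y, (List.ofFn fun i => f i (y i)).prod ∂(Measure.pi fun _ => μ)
      = (List.ofFn fun i => ∫ x, f i x ∂μ).prod := by
  induction n with
  | zero => simp
  | succ n ih =>
    have hsplit := (measurePreserving_piFinSuccAbove (fun _ : Fin (n + 1) => μ) 0).symm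
    have hint := (hsplit.integrable_comp_emb (MeasurableEquiv.measurableEmbedding _)).mpr
      (integrable_list_ofFn_prod hf)
    simp only [Function.comp_def] at hint
    rw [← hsplit.integral_comp', integral_prod _ hint]
    simp_rw [MeasurableEquiv.piFinSuccAbove_symm_apply, Fin.insertNthEquiv,
      Equiv.coe_fn_mk, Fin.insertNth_zero, List.ofFn_succ, List.prod_cons, Fin.cons_zero,
      Fin.cons_succ, cast_eq]
    have hrest : ∀ t, ∫ z : Fin n → X, f 0 t * (List.ofFn fun i => f i.succ (z i)).prod
        ∂(Measure.pi fun _ => μ) = f 0 t * (List.ofFn fun i => ∫ x, f i.succ x ∂μ).prod := by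
      intro t
      rw [integral_const_mul_of_integrable (integrable_list_ofFn_prod fun i => hf i.succ),
        ih fun i => hf i.succ]
    simp_rw [hrest]
    exact integral_mul_const_of_integrable (hf 0).integrable_of_compactSpace

end OrderedProduct

section Representation

variable {V : Type*} [NormedAddCommGroup V] [NormedSpace ℂ V] [FiniteDimensional ℂ V]

variable (V) in
noncomputable def traceCLM : (V →L[ℂ] V) →L[ℂ] ℂ :=
  LinearMap.toContinuousLinearMap ((LinearMap.trace ℂ V).comp (ContinuousLinearMap.coeLM ℂ))

theorem traceCLM_apply (A : V →L[ℂ] V) : traceCLM V A = LinearMap.trace ℂ V A := rfl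

theorem traceCLM_mul_comm (A B : V →L[ℂ] V) : traceCLM V (A * B) = traceCLM V (B * A) :=
  LinearMap.trace_mul_comm ℂ (A : V →ₗ[ℂ] V) B

theorem traceCLM_one : traceCLM V 1 = Module.finrank ℂ V := LinearMap.trace_id ℂ V

theorem traceCLM_eq_sum_coord {ι : Type*} [Fintype ι] [DecidableEq ι] (b : Module.Basis ι ℂ V)
    (A : V →L[ℂ] V) : traceCLM V A = ∑ i, b.coord i (A (b i)) := by
  rw [traceCLM_apply, LinearMap.trace_eq_matrix_trace ℂ b, Matrix.trace]
  simp only [Matrix.diag_apply, LinearMap.toMatrix_apply, Module.Basis.coord_apply]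
  rfl

def IsIrreducibleRep {G : Type*} [Monoid G] (ρ : G →* (V →L[ℂ] V)) : Prop :=
  ∀ W : Submodule ℂ V, (∀ g, W.map (ρ g : V →ₗ[ℂ] V) ≤ W) → W = ⊥ ∨ W = ⊤

theorem IsIrreducibleRep.eq_smul_one_of_commute {G : Type*} [Monoid G] {ρ : G →* (V →L[ℂ] V)}
    (hρ : IsIrreducibleRep ρ) {A : V →L[ℂ] V} (hA : ∀ g, Commute (ρ g) A) :
    A = (traceCLM V A / Module.finrank ℂ V) • 1 := by
  rcases subsingleton_or_nontrivial V with hV | hV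
  · exact Subsingleton.elim _ _
  obtain ⟨c, hc⟩ := Module.End.exists_eigenvalue (A : V →ₗ[ℂ] V)
  have hinv : ∀ g, (Module.End.eigenspace (A : V →ₗ[ℂ] V) c).map (ρ g : V →ₗ[ℂ] V)
      ≤ Module.End.eigenspace (A : V →ₗ[ℂ] V) c := by
    rintro g _ ⟨v, hv, rfl⟩
    rw [SetLike.mem_coe, Module.End.mem_eigenspace_iff] at hv
    rw [Module.End.mem_eigenspace_iff]
    have hv' : A v = c • v := hv
    change A (ρ g v) = c • ρ g v
    rw [← mul_apply_eq_comp, ← (hA g).eq, mul_apply_eq_comp, hv', map_smul]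
  have hA : A = c • 1 := by
    ext v
    have hv : v ∈ Module.End.eigenspace (A : V →ₗ[ℂ] V) c :=
      ((hρ _ hinv).resolve_left hc).symm ▸ Submodule.mem_top
    exact Module.End.mem_eigenspace_iff.mp hv
  have hd : (Module.finrank ℂ V : ℂ) ≠ 0 := by exact_mod_cast Module.finrank_pos.ne'
  rw [hA, map_smul, traceCLM_one, smul_eq_mul, mul_div_cancel_right₀ _ hd]

theorem trace_rep_mul_of_mem_center {G : Type*} [Group G] {ρ : G →* (V →L[ℂ] V)}
    (hρ : IsIrreducibleRep ρ) {u : G} (hu : u ∈ Subgroup.center G) (a : G) :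
    traceCLM V (ρ (a * u)) = traceCLM V (ρ a) * traceCLM V (ρ u) / Module.finrank ℂ V := by
  have hscalar := hρ.eq_smul_one_of_commute (A := ρ u) fun g => by
    rw [Commute, SemiconjBy, ← map_mul, ← map_mul, (Subgroup.mem_center_iff.mp hu g)]
  conv_lhs => rw [map_mul, hscalar, mul_smul_comm, mul_one, map_smul, smul_eq_mul]
  ring

section HaarIntegral

variable {G : Type*} [Group G] [TopologicalSpace G] [IsTopologicalGroup G] [CompactSpace G]
  [MeasurableSpace G] [BorelSpace G] {μ : Measure G} [μ.IsMulLeftInvariant]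
  [IsProbabilityMeasure μ] {ρ : G →* (V →L[ℂ] V)}

theorem integral_rep_mul_mul_rep_inv (hcont : Continuous ρ) (hρ : IsIrreducibleRep ρ)
    (B : V →L[ℂ] V) :
    ∫ s, ρ s * B * ρ s⁻¹ ∂μ = (traceCLM V B / Module.finrank ℂ V) • 1 := by
  set F : G → V →L[ℂ] V := fun s => ρ s * B * ρ s⁻¹
  have hF : Continuous F := (hcont.mul continuous_const).mul (hcont.comp continuous_inv)
  have hF_int : ∀ t, Integrable (fun s => F (t * s)) μ := fun t =>
    (hF.comp (continuous_const_mul t)).integrable_of_compactSpace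
  have hcomm : ∀ t, Commute (ρ t) (∫ s, F s ∂μ) := fun t => by
    have hshift : ∀ s, ρ t * F s = F (t * s) * ρ t := fun s => by
      simp only [F, mul_inv_rev, map_mul, mul_assoc, map_inv_mul_cancel, mul_one]
    calc ρ t * ∫ s, F s ∂μ = ∫ s, ρ t * F s ∂μ :=
          (integral_const_mul_of_integrable hF.integrable_of_compactSpace).symm
      _ = (∫ s, F (t * s) ∂μ) * ρ t := by
          simp_rw [hshift]; exact integral_mul_const_of_integrable (hF_int t)
      _ = (∫ s, F s ∂μ) * ρ t := by rw [integral_mul_left_eq_self F t]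
  have htrace : traceCLM V (∫ s, F s ∂μ) = traceCLM V B := by
    rw [← (traceCLM V).integral_comp_comm hF.integrable_of_compactSpace]
    simp only [F, traceCLM_mul_comm _ (ρ _⁻¹), ← mul_assoc, map_inv_mul_cancel, one_mul,
      integral_const, probReal_univ, one_smul]
  rw [(hρ.eq_smul_one_of_commute hcomm), htrace]

theorem integral_rep_commutator (hcont : Continuous ρ) (hρ : IsIrreducibleRep ρ) (x : G) :
    ∫ y, ρ (x * y * x⁻¹ * y⁻¹) ∂μ = (traceCLM V (ρ x⁻¹) / Module.finrank ℂ V) • ρ x := by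
  have hint : Integrable (fun y => ρ y * ρ x⁻¹ * ρ y⁻¹) μ :=
    ((hcont.mul continuous_const).mul (hcont.comp continuous_inv)).integrable_of_compactSpace
  calc ∫ y, ρ (x * y * x⁻¹ * y⁻¹) ∂μ = ∫ y, ρ x * (ρ y * ρ x⁻¹ * ρ y⁻¹) ∂μ := by
        simp only [map_mul, mul_assoc]
    _ = ρ x * ∫ y, ρ y * ρ x⁻¹ * ρ y⁻¹ ∂μ := integral_const_mul_of_integrable hint
    _ = _ := by rw [integral_rep_mul_mul_rep_inv hcont hρ, mul_smul_comm, mul_one]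

/-- With `E i := (b i)* ⊗ w` one has `tr (ρ s⁻¹) • ρ s w = ∑ i, (ρ s * E i * ρ s⁻¹) (b i)`, so this
is again the Schur average `integral_rep_mul_mul_rep_inv`. -/
theorem integral_trace_rep_inv_smul_rep (hcont : Continuous ρ) (hρ : IsIrreducibleRep ρ) :
    ∫ s, traceCLM V (ρ s⁻¹) • ρ s ∂μ = (Module.finrank ℂ V : ℂ)⁻¹ • 1 := by
  classical
  set b := Module.finBasis ℂ V
  ext w
  set E : Fin (Module.finrank ℂ V) → V →L[ℂ] V := fun i =>
    (LinearMap.toContinuousLinearMap (b.coord i) : V →L[ℂ] ℂ).smulRight w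
  have hint : Integrable (fun s => traceCLM V (ρ s⁻¹) • ρ s) μ :=
    (((traceCLM V).continuous.comp (hcont.comp continuous_inv)).smul
      hcont).integrable_of_compactSpace
  have hint_conj : ∀ i, Integrable (fun s => ρ s * E i * ρ s⁻¹) μ := fun i =>
    ((hcont.mul continuous_const).mul (hcont.comp continuous_inv)).integrable_of_compactSpace
  have hpoint : ∀ s, traceCLM V (ρ s⁻¹) • ρ s w = ∑ i, (ρ s * E i * ρ s⁻¹) (b i) := fun s => by
    simp [traceCLM_eq_sum_coord b, Finset.sum_smul, E, mul_apply_eq_comp]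
  calc (∫ s, traceCLM V (ρ s⁻¹) • ρ s ∂μ) w = ∫ s, traceCLM V (ρ s⁻¹) • ρ s w ∂μ :=
        ContinuousLinearMap.integral_apply hint w
    _ = ∑ i, (∫ s, ρ s * E i * ρ s⁻¹ ∂μ) (b i) := by
        simp_rw [hpoint]
        rw [integral_finsetSum _ fun i _ => (hint_conj i).apply_continuousLinearMap (b i)]
        exact Finset.sum_congr rfl fun i _ =>
          (ContinuousLinearMap.integral_apply (hint_conj i) (b i)).symm
    _ = ((Module.finrank ℂ V : ℂ)⁻¹ • (1 : V →L[ℂ] V)) w := by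
        have htrace : ∀ i, traceCLM V (E i) = b.coord i w := fun i =>
          LinearMap.trace_smulRight (b.coord i) w
        simp only [integral_rep_mul_mul_rep_inv hcont hρ, htrace, div_eq_inv_mul, mul_smul,
          smul_apply, one_apply_eq_self, ← Finset.smul_sum,
          Module.Basis.coord_apply, b.sum_repr]

theorem integral_rep_list_ofFn_commutator (hcont : Continuous ρ) (hρ : IsIrreducibleRep ρ)
    {n : ℕ} (x : Fin n → G) :
    ∫ y, ρ (List.ofFn fun i => x i * y i * (x i)⁻¹ * (y i)⁻¹).prod ∂(Measure.pi fun _ => μ)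
      = (List.ofFn fun i => (traceCLM V (ρ (x i)⁻¹) / Module.finrank ℂ V) • ρ (x i)).prod := by
  simp_rw [map_list_prod, List.map_ofFn, Function.comp_def]
  rw [integral_list_ofFn_prod (f := fun i t => ρ (x i * t * (x i)⁻¹ * t⁻¹))
    fun i => hcont.comp (by fun_prop)]
  simp_rw [integral_rep_commutator hcont hρ]

theorem integral_integral_rep_list_ofFn_commutator (hcont : Continuous ρ)
    (hρ : IsIrreducibleRep ρ) (n : ℕ) :
    ∫ x : Fin n → G, ∫ y : Fin n → G, ρ (List.ofFn fun i => x i * y i * (x i)⁻¹ * (y i)⁻¹).prod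
        ∂(Measure.pi fun _ => μ) ∂(Measure.pi fun _ => μ)
      = ((Module.finrank ℂ V : ℂ) ^ (2 * n))⁻¹ • 1 := by
  simp_rw [integral_rep_list_ofFn_commutator hcont hρ]
  rw [integral_list_ofFn_prod (f := fun _ t => (traceCLM V (ρ t⁻¹) / Module.finrank ℂ V) • ρ t)
    fun _ => (((traceCLM V).continuous.comp (hcont.comp continuous_inv)).div_const _).smul hcont]
  simp_rw [div_eq_inv_mul, mul_smul, integral_smul, integral_trace_rep_inv_smul_rep hcont hρ,
    smul_smul, List.ofFn_const, List.prod_replicate, smul_pow, one_pow]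
  congr 1
  ring

theorem integral_integral_trace_rep_commutator (hcont : Continuous ρ) (hρ : IsIrreducibleRep ρ)
    (n : ℕ) (a b : G) :
    ∫ x : Fin n → G, ∫ y : Fin n → G,
        traceCLM V (ρ (a * (List.ofFn fun i => x i * y i * (x i)⁻¹ * (y i)⁻¹).prod * b))
        ∂(Measure.pi fun _ => μ) ∂(Measure.pi fun _ => μ)
      = traceCLM V (ρ (a * b)) / (Module.finrank ℂ V : ℂ) ^ (2 * n) := by
  set L : (V →L[ℂ] V) →L[ℂ] ℂ :=
    (traceCLM V).comp ((ContinuousLinearMap.mul ℂ _ (ρ a)).comp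
      ((ContinuousLinearMap.mul ℂ _).flip (ρ b)))
  have hL : ∀ z, traceCLM V (ρ (a * z * b)) = L (ρ z) := fun z => by simp [L, map_mul, mul_assoc]
  have hint_y : ∀ x : Fin n → G, Integrable (fun y : Fin n → G =>
      ρ (List.ofFn fun i => x i * y i * (x i)⁻¹ * (y i)⁻¹).prod) (Measure.pi fun _ => μ) :=
    fun x => by
      simp_rw [map_list_prod, List.map_ofFn, Function.comp_def]
      exact integrable_list_ofFn_prod (f := fun i t => ρ (x i * t * (x i)⁻¹ * t⁻¹))
        fun i => hcont.comp (by fun_prop)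
  have hint_x : Integrable (fun x : Fin n → G => ∫ y : Fin n → G,
      ρ (List.ofFn fun i => x i * y i * (x i)⁻¹ * (y i)⁻¹).prod ∂(Measure.pi fun _ => μ))
      (Measure.pi fun _ => μ) := by
    simp_rw [integral_rep_list_ofFn_commutator hcont hρ]
    exact integrable_list_ofFn_prod
      (f := fun _ t => (traceCLM V (ρ t⁻¹) / Module.finrank ℂ V) • ρ t)
      fun _ => (((traceCLM V).continuous.comp (hcont.comp continuous_inv)).div_const _).smul hcont
  simp_rw [hL]
  rw [integral_congr_ae (Filter.Eventually.of_forall fun x => L.integral_comp_comm (hint_y x)),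
    L.integral_comp_comm hint_x, integral_integral_rep_list_ofFn_commutator hcont hρ]
  simp [L, map_mul, div_eq_inv_mul]

end HaarIntegral

end Representation

end WilsonLine

open WilsonLine in
theorem wilson_line_contractible_integral_general
    {G : Type*} [Group G] [TopologicalSpace G] [IsTopologicalGroup G]
    [CompactSpace G] [MeasurableSpace G] [BorelSpace G]
    (μ : Measure G) [μ.IsHaarMeasure] [IsProbabilityMeasure μ]
    {Vν : Type*} [NormedAddCommGroup Vν] [InnerProductSpace ℂ Vν]
    [FiniteDimensional ℂ Vν]
    (ρν : G →* unitary (Vν →L[ℂ] Vν))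
    (hcontν : Continuous fun g : G => ((ρν g : Vν →L[ℂ] Vν) : Vν →L[ℂ] Vν))
    (hirrν : ∀ W : Submodule ℂ Vν,
      (∀ g : G, W.map ((ρν g : Vν →L[ℂ] Vν) : Vν →ₗ[ℂ] Vν) ≤ W) → W = ⊥ ∨ W = ⊤)
    (χσ χμ χν : G → ℂ)
    (hχν : ∀ g, χν g = LinearMap.trace ℂ Vν ((ρν g : Vν →L[ℂ] Vν) : Vν →ₗ[ℂ] Vν))
    (u : G) (hu : u ∈ Subgroup.center G)
    (g : ℕ)
    (D : ℂ) (hD : D = ∫ x, χσ x * χμ x * χν x⁻¹ ∂μ) :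
    ∫ xbar : G, ∫ x : Fin g → G, ∫ y : Fin g → G,
        χσ xbar * χμ xbar *
          χν (xbar⁻¹ * (List.ofFn fun i : Fin g => x i * y i * (x i)⁻¹ * (y i)⁻¹).prod * u⁻¹)
        ∂(Measure.pi fun _ => μ) ∂(Measure.pi fun _ => μ) ∂μ =
      D * χν u⁻¹ / (Module.finrank ℂ Vν : ℂ) ^ (2 * g + 1) := by
  set ρ : G →* (Vν →L[ℂ] Vν) := (unitary (Vν →L[ℂ] Vν)).subtype.comp ρν
  have hρ : IsIrreducibleRep ρ := hirrν
  obtain rfl : χν = fun t => traceCLM Vν (ρ t) := funext hχν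
  have hinner : ∀ xbar : G, ∫ x : Fin g → G, ∫ y : Fin g → G, χσ xbar * χμ xbar *
        traceCLM Vν (ρ (xbar⁻¹ * (List.ofFn fun i => x i * y i * (x i)⁻¹ * (y i)⁻¹).prod * u⁻¹))
        ∂(Measure.pi fun _ => μ) ∂(Measure.pi fun _ => μ)
      = χσ xbar * χμ xbar * traceCLM Vν (ρ xbar⁻¹)
          * (traceCLM Vν (ρ u⁻¹) / (Module.finrank ℂ Vν : ℂ) ^ (2 * g + 1)) := fun xbar => by
    simp_rw [integral_const_mul, integral_integral_trace_rep_commutator hcontν hρ,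
      trace_rep_mul_of_mem_center hρ (Subgroup.inv_mem _ hu)]
    ring
  simp_rw [hinner]
  rw [integral_mul_const, hD]
  ring

/-- Wilson line expectation for a contractible loop on a genus-`g` surface, for a bundle of
topological type `u`:
`∫_{G^{2g+1}} χ_σ(x̄) χ_μ(x̄) χ_ν(x̄⁻¹ (∏ᵢ xᵢ yᵢ xᵢ⁻¹ yᵢ⁻¹) u⁻¹) dx̄ dx dy
  = D χ_ν(u⁻¹) / d_ν^{2g+1}`, where `D = ∫_G χ_σ(x) χ_μ(x) χ_ν(x⁻¹) dx`. -/
theorem wilson_line_contractible_integral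
    {G : Type*} [Group G] [TopologicalSpace G] [IsTopologicalGroup G]
    [CompactSpace G] [T2Space G] [MeasurableSpace G] [BorelSpace G]
    (μ : Measure G) [μ.IsHaarMeasure] [IsProbabilityMeasure μ]
    {Vσ : Type*} [NormedAddCommGroup Vσ] [InnerProductSpace ℂ Vσ]
    [FiniteDimensional ℂ Vσ]
    {Vμ : Type*} [NormedAddCommGroup Vμ] [InnerProductSpace ℂ Vμ]
    [FiniteDimensional ℂ Vμ]
    {Vν : Type*} [NormedAddCommGroup Vν] [InnerProductSpace ℂ Vν]
    [FiniteDimensional ℂ Vν]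
    (ρσ : G →* unitary (Vσ →L[ℂ] Vσ))
    (ρμ : G →* unitary (Vμ →L[ℂ] Vμ))
    (ρν : G →* unitary (Vν →L[ℂ] Vν))
    (hcontσ : Continuous fun g : G => ((ρσ g : Vσ →L[ℂ] Vσ) : Vσ →L[ℂ] Vσ))
    (hcontμ : Continuous fun g : G => ((ρμ g : Vμ →L[ℂ] Vμ) : Vμ →L[ℂ] Vμ))
    (hcontν : Continuous fun g : G => ((ρν g : Vν →L[ℂ] Vν) : Vν →L[ℂ] Vν))
    (hirrσ : ∀ W : Submodule ℂ Vσ,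
      (∀ g : G, W.map ((ρσ g : Vσ →L[ℂ] Vσ) : Vσ →ₗ[ℂ] Vσ) ≤ W) → W = ⊥ ∨ W = ⊤)
    (hirrμ : ∀ W : Submodule ℂ Vμ,
      (∀ g : G, W.map ((ρμ g : Vμ →L[ℂ] Vμ) : Vμ →ₗ[ℂ] Vμ) ≤ W) → W = ⊥ ∨ W = ⊤)
    (hirrν : ∀ W : Submodule ℂ Vν,
      (∀ g : G, W.map ((ρν g : Vν →L[ℂ] Vν) : Vν →ₗ[ℂ] Vν) ≤ W) → W = ⊥ ∨ W = ⊤)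
    (χσ χμ χν : G → ℂ)
    (hχσ : ∀ g, χσ g = LinearMap.trace ℂ Vσ ((ρσ g : Vσ →L[ℂ] Vσ) : Vσ →ₗ[ℂ] Vσ))
    (hχμ : ∀ g, χμ g = LinearMap.trace ℂ Vμ ((ρμ g : Vμ →L[ℂ] Vμ) : Vμ →ₗ[ℂ] Vμ))
    (hχν : ∀ g, χν g = LinearMap.trace ℂ Vν ((ρν g : Vν →L[ℂ] Vν) : Vν →ₗ[ℂ] Vν))
    (u : G) (hu : u ∈ Subgroup.center G)
    (g : ℕ) (hg : 1 ≤ g)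
    (D : ℂ) (hD : D = ∫ x, χσ x * χμ x * χν x⁻¹ ∂μ) :
    ∫ xbar : G, ∫ x : Fin g → G, ∫ y : Fin g → G,
        χσ xbar * χμ xbar *
          χν (xbar⁻¹ * (List.ofFn fun i : Fin g => x i * y i * (x i)⁻¹ * (y i)⁻¹).prod * u⁻¹)
        ∂(Measure.pi fun _ => μ) ∂(Measure.pi fun _ => μ) ∂μ =
      D * χν u⁻¹ / (Module.finrank ℂ Vν : ℂ) ^ (2 * g + 1) :=
  wilson_line_contractible_integral_general μ ρν hcontν hirrν χσ χμ χν hχν u hu g D hD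
end

section
/- Let G be a finite group and let χ be the character of an irreducible finite-dimensional complex representation of G, of degree d = χ(1). Then for all w, x ∈ G: (1/|G|) · ∑_{y ∈ G} χ(w·x·y·x⁻¹·y⁻¹) = χ(w·x)·χ(x⁻¹)/d. -/
/-- Finite-group form of the first character orthogonality relation:
`(1/|G|) ∑_y χ(w x y x⁻¹ y⁻¹) = χ(wx) χ(x⁻¹) / d` with `d = χ(1)`. -/
theorem finite_character_orthogonality_first
    {G : Type*} [Group G] [Fintype G]
    {V : Type*} [AddCommGroup V] [Module ℂ V] [FiniteDimensional ℂ V]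
    [Nontrivial V]
    (ρ : Representation ℂ G V)
    (hirr : ∀ W : Submodule ℂ V, (∀ g : G, W.map (ρ g) ≤ W) → W = ⊥ ∨ W = ⊤)
    (χ : G → ℂ)
    (hχ : ∀ g, χ g = LinearMap.trace ℂ V (ρ g))
    (w x : G) :
    (1 / (Fintype.card G : ℂ)) * ∑ y : G, χ (w * x * y * x⁻¹ * y⁻¹) =
      χ (w * x) * χ x⁻¹ / χ 1 := by
  classical
  set g : G := w * x with hg
  set h : G := x⁻¹ with hh
  set T : Module.End ℂ V := ∑ y : G, (ρ (y * h * y⁻¹) : Module.End ℂ V) with hT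
  have hcomm : ∀ z : G, (ρ z : Module.End ℂ V) * T = T * ρ z := by
    intro z
    rw [hT, Finset.mul_sum, Finset.sum_mul]
    refine Fintype.sum_equiv (Equiv.mulLeft z) _ _ ?_
    intro y
    show (ρ z : Module.End ℂ V) * ρ (y * h * y⁻¹) = ρ (z * y * h * (z * y)⁻¹) * ρ z
    rw [← map_mul, ← map_mul]
    congr 1
    group
  obtain ⟨c, hc⟩ := Module.End.exists_eigenvalue T
  have hW : ∀ v : V, T v = c • v := by
    have hinv : ∀ z : G, (T.eigenspace c).map (ρ z) ≤ T.eigenspace c := by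
      intro z v hv
      obtain ⟨u, hu, rfl⟩ := hv
      simp only [SetLike.mem_coe] at hu
      rw [Module.End.mem_eigenspace_iff] at hu ⊢
      have h1 : T (ρ z u) = ρ z (T u) := by
        have := congrArg (fun f : Module.End ℂ V => f u) (hcomm z)
        exact this.symm
      rw [h1, hu, map_smul]
    rcases hirr _ hinv with h0 | htop
    · exact absurd h0 hc
    · intro v
      have : v ∈ T.eigenspace c := htop ▸ Submodule.mem_top
      exact Module.End.mem_eigenspace_iff.mp this
  have hTeq : T = c • (1 : Module.End ℂ V) := by
    ext v; simpa using hW v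
  -- trace computations
  have htrT : LinearMap.trace ℂ V T = (Fintype.card G : ℂ) * χ h := by
    rw [hT, map_sum]
    have key : ∀ y : G, LinearMap.trace ℂ V (ρ (y * h * y⁻¹)) = χ h := by
      intro y
      rw [hχ]
      have : (ρ (y * h * y⁻¹) : Module.End ℂ V) = ρ y * ((ρ h : Module.End ℂ V) * ρ y⁻¹) := by
        rw [← map_mul, ← map_mul, mul_assoc]
      rw [this, LinearMap.trace_mul_comm, mul_assoc, ← map_mul, inv_mul_cancel, map_one,
        mul_one]
    rw [Finset.sum_congr rfl (fun y _ => key y), Finset.sum_const, Finset.card_univ,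
      nsmul_eq_mul]
  have hd : χ 1 = (Module.finrank ℂ V : ℂ) := by
    rw [hχ, map_one]
    exact LinearMap.trace_one ℂ V
  have hdne : χ 1 ≠ 0 := by
    rw [hd]
    exact_mod_cast (Module.finrank_pos (R := ℂ) (M := V)).ne'
  have hcard : (Fintype.card G : ℂ) ≠ 0 := by
    exact_mod_cast Fintype.card_ne_zero
  have hc_val : c * χ 1 = (Fintype.card G : ℂ) * χ h := by
    have := htrT
    rw [hTeq, map_smul, LinearMap.trace_one, smul_eq_mul] at this
    rw [hd]
    exact this
  have hsum : ∑ y : G, χ (w * x * y * x⁻¹ * y⁻¹) = c * χ g := by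
    have step : ∀ y : G, χ (w * x * y * x⁻¹ * y⁻¹) = LinearMap.trace ℂ V
        ((ρ g : Module.End ℂ V) * ρ (y * h * y⁻¹)) := by
      intro y
      rw [hχ, ← map_mul]
      congr 2
      rw [hg, hh]
      group
    rw [Finset.sum_congr rfl (fun y _ => step y), ← map_sum, ← Finset.mul_sum, ← hT,
      hTeq, mul_smul_comm, mul_one, map_smul, smul_eq_mul, hχ]
  rw [hsum]
  field_simp
  linear_combination χ g * hc_val
end

section
/- Let G be a finite group and let χ be the character of an irreducible finite-dimensional complex representation of G, of degree d = χ(1). Then for every integer g ≥ 1 and every w ∈ G: (1/|G|^{2g}) · ∑_{(x_1,…,x_g,y_1,…,y_g) ∈ G^{2g}} χ(w · ∏_{i=1}^{g} x_i y_i x_i⁻¹ y_i⁻¹) = χ(w)/d^{2g}, the product being taken in the order i = 1, …, g. -/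
open LinearMap Module

section Aux

variable {G : Type*} [Group G] [Fintype G]
  {V : Type*} [AddCommGroup V] [Module ℂ V] [FiniteDimensional ℂ V] [Nontrivial V]
  (ρ : Representation ℂ G V)

local notation "d" => (Module.finrank ℂ V : ℂ)
local notation "tr" => LinearMap.trace ℂ V

lemma aux_d_ne_zero : (Module.finrank ℂ V : ℂ) ≠ 0 := by
  have : 0 < Module.finrank ℂ V := Module.finrank_pos
  exact_mod_cast this.ne'

lemma aux_cancel (g : G) (v : V) : ρ g (ρ g⁻¹ v) = v := by
  rw [← Module.End.mul_apply, ← map_mul, mul_inv_cancel, map_one, Module.End.one_apply]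

lemma aux_cancel' (g : G) (v : V) : ρ g⁻¹ (ρ g v) = v := by
  rw [← Module.End.mul_apply, ← map_mul, inv_mul_cancel, map_one, Module.End.one_apply]

variable (hirr : ∀ W : Submodule ℂ V, (∀ g : G, W.map (ρ g) ≤ W) → W = ⊥ ∨ W = ⊤)

include hirr in
lemma aux_schur (T : Module.End ℂ V) (hT : ∀ g : G, ρ g * T = T * ρ g) :
    T = (tr T / d) • 1 := by
  obtain ⟨c, hc⟩ := Module.End.exists_eigenvalue T
  have hW : ∀ g : G, (T.eigenspace c).map (ρ g) ≤ T.eigenspace c := by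
    rintro g v ⟨u, hu, rfl⟩
    have hu' : u ∈ T.eigenspace c := hu
    rw [Module.End.mem_eigenspace_iff] at hu'
    rw [Module.End.mem_eigenspace_iff]
    have h1 : T (ρ g u) = ρ g (T u) := by
      have := congrArg (fun S : Module.End ℂ V => S u) (hT g)
      simpa using this.symm
    rw [h1, hu', map_smul]
  have htop : T.eigenspace c = ⊤ := by
    rcases hirr _ hW with h | h
    · exact absurd h hc
    · exact h
  have hTc : T = c • 1 := by
    ext v
    have hv : v ∈ T.eigenspace c := htop ▸ Submodule.mem_top
    rw [Module.End.mem_eigenspace_iff] at hv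
    simpa using hv
  have htr : tr T = c * d := by
    rw [hTc, map_smul, LinearMap.trace_one, smul_eq_mul]
  rw [htr, mul_div_assoc, div_self aux_d_ne_zero, mul_one, hTc]

include hirr in
lemma aux_conj_sum (h : G) :
    (∑ x : G, ρ (x * h * x⁻¹) : Module.End ℂ V)
      = (((Fintype.card G : ℂ) * tr (ρ h)) / d) • 1 := by
  have hcomm : ∀ g : G, ρ g * (∑ x : G, ρ (x * h * x⁻¹)) =
      (∑ x : G, ρ (x * h * x⁻¹)) * ρ g := by
    intro g
    rw [Finset.mul_sum, Finset.sum_mul]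
    refine Fintype.sum_equiv (Equiv.mulLeft g) _ _ fun x => ?_
    rw [← map_mul, ← map_mul]
    congr 1
    simp only [Equiv.coe_mulLeft]
    group
  have htr : tr (∑ x : G, ρ (x * h * x⁻¹)) = (Fintype.card G : ℂ) * tr (ρ h) := by
    rw [map_sum]
    have heach : ∀ x : G, tr (ρ (x * h * x⁻¹)) = tr (ρ h) := by
      intro x
      have hx : ρ (x * h * x⁻¹) = ρ x * ρ (h * x⁻¹) := by
        rw [← map_mul]; congr 1; group
      rw [hx, LinearMap.trace_mul_comm, ← map_mul]
      congr 2
      group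
    rw [Finset.sum_congr rfl fun x _ => heach x, Finset.sum_const, Finset.card_univ,
      nsmul_eq_mul]
  rw [← htr]
  exact aux_schur ρ hirr _ hcomm

include hirr in
lemma aux_sum_char_inv :
    ∑ x : G, tr (ρ x⁻¹) * tr (ρ x) = (Fintype.card G : ℂ) := by
  have hcard : (Fintype.card G : ℂ) ≠ 0 := by
    exact_mod_cast Fintype.card_ne_zero
  have : Invertible (Fintype.card G : ℂ) := invertibleOfNonzero hcard
  set σ := ρ.linHom ρ with hσ
  -- invariants of σ are the scalars
  have hinv : σ.invariants = Submodule.span ℂ {(1 : Module.End ℂ V)} := by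
    apply le_antisymm
    · intro f hf
      rw [Representation.mem_invariants] at hf
      have hfc : ∀ g : G, ρ g * f = f * ρ g := by
        intro g
        have hg := hf g
        rw [hσ, Representation.linHom_apply] at hg
        ext v
        conv_rhs => rw [← hg]
        simp only [Module.End.mul_apply, LinearMap.comp_apply]
        rw [aux_cancel']
      rw [aux_schur ρ hirr f hfc]
      exact Submodule.smul_mem _ _ (Submodule.mem_span_singleton_self _)
    · rw [Submodule.span_le, Set.singleton_subset_iff]
      rw [SetLike.mem_coe, Representation.mem_invariants]
      intro g
      rw [hσ, Representation.linHom_apply]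
      ext v
      simp only [LinearMap.comp_apply, Module.End.one_apply]
      rw [aux_cancel]
  have hone : (1 : Module.End ℂ V) ≠ 0 := one_ne_zero
  have hrank : Module.finrank ℂ σ.invariants = 1 := by
    rw [hinv]; exact finrank_span_singleton hone
  -- trace of each linHom operator
  have htrlin : ∀ g : G, LinearMap.trace ℂ (V →ₗ[ℂ] V) (σ g) = tr (ρ g⁻¹) * tr (ρ g) := by
    intro g
    have hc := Representation.dualTensorHom_comm ρ ρ g
    have hconj : σ g = (dualTensorHomEquiv ℂ V V).conj
        (TensorProduct.map (ρ.dual g) (ρ g)) := by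
      rw [LinearEquiv.conj_apply, LinearEquiv.eq_comp_toLinearMap_symm]
      exact hc.symm
    rw [hconj, LinearMap.trace_conj', LinearMap.trace_tensorProduct',
      Representation.dual_apply, LinearMap.trace_transpose']
  -- average map trace
  have hproj := (Representation.isProj_averageMap σ).trace
  have havg2 : σ.averageMap = ⅟(Fintype.card G : ℂ) • ∑ g : G, σ g := by
    rw [Representation.averageMap, GroupAlgebra.average, map_smul, map_sum]
    congr 1
    exact Finset.sum_congr rfl fun g _ => Representation.asAlgebraHom_single_one σ g
  have hsum : ∑ x : G, LinearMap.trace ℂ (V →ₗ[ℂ] V) (σ x)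
      = ∑ x : G, tr (ρ x⁻¹) * tr (ρ x) :=
    Finset.sum_congr rfl fun x _ => htrlin x
  rw [havg2, map_smul, map_sum, hrank, Nat.cast_one, hsum] at hproj
  calc ∑ x : G, tr (ρ x⁻¹) * tr (ρ x)
      = ((Fintype.card G : ℂ) * ⅟(Fintype.card G : ℂ)) • ∑ x : G, tr (ρ x⁻¹) * tr (ρ x) := by
        rw [mul_invOf_self, one_smul]
    _ = (Fintype.card G : ℂ) • (⅟(Fintype.card G : ℂ) • ∑ x : G, tr (ρ x⁻¹) * tr (ρ x)) := by
        rw [mul_smul]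
    _ = (Fintype.card G : ℂ) := by rw [hproj, smul_eq_mul, mul_one]

end Aux

section Main

set_option linter.unusedSectionVars false

variable {G : Type*} [Group G] [Fintype G]
  {V : Type*} [AddCommGroup V] [Module ℂ V] [FiniteDimensional ℂ V] [Nontrivial V]
  (ρ : Representation ℂ G V)
  (hirr : ∀ W : Submodule ℂ V, (∀ g : G, W.map (ρ g) ≤ W) → W = ⊥ ∨ W = ⊤)

local notation "d" => (Module.finrank ℂ V : ℂ)
local notation "tr" => LinearMap.trace ℂ V

lemma aux_char_conj (g h : G) : tr (ρ (g * h * g⁻¹)) = tr (ρ h) := by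
  have hx : ρ (g * h * g⁻¹) = ρ g * ρ (h * g⁻¹) := by
    rw [← map_mul]; congr 1; group
  rw [hx, LinearMap.trace_mul_comm, ← map_mul]
  congr 2
  group

include hirr in
lemma aux_Tprime :
    (∑ y : G, tr (ρ y) • ρ y⁻¹ : Module.End ℂ V)
      = ((Fintype.card G : ℂ) / d) • 1 := by
  have hcomm : ∀ g : G, ρ g * (∑ y : G, tr (ρ y) • ρ y⁻¹) =
      (∑ y : G, tr (ρ y) • ρ y⁻¹) * ρ g := by
    intro g
    rw [Finset.mul_sum, Finset.sum_mul]
    refine Fintype.sum_equiv ((Equiv.mulLeft g).trans (Equiv.mulRight g⁻¹)) _ _ fun y => ?_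
    simp only [Equiv.trans_apply, Equiv.coe_mulLeft, Equiv.coe_mulRight]
    rw [mul_smul_comm, smul_mul_assoc, aux_char_conj ρ g y, ← map_mul, ← map_mul]
    congr 2
    group
  have htr : tr (∑ y : G, tr (ρ y) • ρ y⁻¹ : Module.End ℂ V) = (Fintype.card G : ℂ) := by
    rw [map_sum]
    have : ∀ y : G, tr ((tr (ρ y) • ρ y⁻¹ : Module.End ℂ V)) = tr (ρ y⁻¹) * tr (ρ y) := by
      intro y
      rw [map_smul, smul_eq_mul, mul_comm]
    rw [Finset.sum_congr rfl fun y _ => this y]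
    exact aux_sum_char_inv ρ hirr
  have := aux_schur ρ hirr _ hcomm
  rw [htr] at this
  exact this

include hirr in
lemma aux_key (w : G) :
    ∑ x : G, ∑ y : G, tr (ρ (w * (x * y * x⁻¹ * y⁻¹)))
      = ((Fintype.card G : ℂ) ^ 2 / d ^ 2) * tr (ρ w) := by
  rw [Finset.sum_comm]
  have inner : ∀ y : G, ∑ x : G, tr (ρ (w * (x * y * x⁻¹ * y⁻¹)))
      = ((Fintype.card G : ℂ) / d) * (tr (ρ y) * tr (ρ w * ρ y⁻¹)) := by
    intro y
    have hsplit : ∀ x : G, ρ (w * (x * y * x⁻¹ * y⁻¹)) = ρ w * ρ (x * y * x⁻¹) * ρ y⁻¹ := by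
      intro x; rw [← map_mul, ← map_mul]; congr 1; group
    calc ∑ x : G, tr (ρ (w * (x * y * x⁻¹ * y⁻¹)))
        = tr (ρ w * (∑ x : G, ρ (x * y * x⁻¹)) * ρ y⁻¹) := by
          rw [Finset.mul_sum, Finset.sum_mul, map_sum]
          exact Finset.sum_congr rfl fun x _ => by rw [hsplit x]
      _ = tr (ρ w * ((((Fintype.card G : ℂ) * tr (ρ y)) / d) • 1) * ρ y⁻¹) := by
          rw [aux_conj_sum ρ hirr y]
      _ = ((Fintype.card G : ℂ) / d) * (tr (ρ y) * tr (ρ w * ρ y⁻¹)) := by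
          rw [mul_smul_comm, smul_mul_assoc, mul_one, map_smul, smul_eq_mul]
          ring
  rw [Finset.sum_congr rfl fun y _ => inner y]
  calc ∑ y : G, ((Fintype.card G : ℂ) / d) * (tr (ρ y) * tr (ρ w * ρ y⁻¹))
      = ((Fintype.card G : ℂ) / d) * tr (ρ w * (∑ y : G, tr (ρ y) • ρ y⁻¹)) := by
        rw [← Finset.mul_sum]
        congr 1
        rw [Finset.mul_sum, map_sum]
        refine Finset.sum_congr rfl fun y _ => ?_
        rw [mul_smul_comm, map_smul, smul_eq_mul]
    _ = ((Fintype.card G : ℂ) ^ 2 / d ^ 2) * tr (ρ w) := by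
        rw [aux_Tprime ρ hirr, mul_smul_comm, mul_one, map_smul, smul_eq_mul]
        ring

include hirr in
lemma aux_master (n : ℕ) (w : G) :
    ∑ x : Fin n → G, ∑ y : Fin n → G,
      tr (ρ (w * (List.ofFn fun i : Fin n => x i * y i * (x i)⁻¹ * (y i)⁻¹).prod))
    = ((Fintype.card G : ℂ) ^ 2 / d ^ 2) ^ n * tr (ρ w) := by
  induction n generalizing w with
  | zero => simp
  | succ n ih =>
    have hsum : ∀ (f : (Fin (n + 1) → G) → ℂ),
        ∑ x : Fin (n + 1) → G, f x = ∑ a : G, ∑ xs : Fin n → G, f (Fin.cons a xs) := by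
      intro f
      rw [← Equiv.sum_comp (Fin.consEquiv (fun _ : Fin (n + 1) => G)) f, Fintype.sum_prod_type]
      rfl
    set F : (Fin (n + 1) → G) → (Fin (n + 1) → G) → ℂ := fun x y =>
      tr (ρ (w * (List.ofFn fun i : Fin (n + 1) => x i * y i * (x i)⁻¹ * (y i)⁻¹).prod)) with hF
    show ∑ x, ∑ y, F x y = _
    have hFval : ∀ (a b : G) (xs ys : Fin n → G),
        F (Fin.cons a xs) (Fin.cons b ys) =
          tr (ρ ((w * (a * b * a⁻¹ * b⁻¹)) *
            (List.ofFn fun i : Fin n => xs i * ys i * (xs i)⁻¹ * (ys i)⁻¹).prod)) := by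
      intro a b xs ys
      simp only [hF]
      rw [List.ofFn_succ, List.prod_cons]
      simp only [Fin.cons_zero, Fin.cons_succ]
      congr 2
      group
    calc ∑ x, ∑ y, F x y
        = ∑ a : G, ∑ xs : Fin n → G, ∑ b : G, ∑ ys : Fin n → G,
            F (Fin.cons a xs) (Fin.cons b ys) := by
          rw [hsum (fun x => ∑ y, F x y)]
          exact Finset.sum_congr rfl fun a _ => Finset.sum_congr rfl fun xs _ => hsum _
      _ = ∑ a : G, ∑ b : G, ∑ xs : Fin n → G, ∑ ys : Fin n → G,
            F (Fin.cons a xs) (Fin.cons b ys) :=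
          Finset.sum_congr rfl fun a _ => Finset.sum_comm
      _ = ∑ a : G, ∑ b : G, ((Fintype.card G : ℂ) ^ 2 / d ^ 2) ^ n *
            tr (ρ (w * (a * b * a⁻¹ * b⁻¹))) := by
          refine Finset.sum_congr rfl fun a _ => Finset.sum_congr rfl fun b _ => ?_
          rw [Finset.sum_congr rfl fun xs _ => Finset.sum_congr rfl fun ys _ => hFval a b xs ys]
          exact ih (w * (a * b * a⁻¹ * b⁻¹))
      _ = ((Fintype.card G : ℂ) ^ 2 / d ^ 2) ^ (n + 1) * tr (ρ w) := by
          simp only [← Finset.mul_sum]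
          rw [aux_key ρ hirr w]
          ring

end Main

/-- Finite-group form of the master holonomy sum on a genus-`g` surface:
`(1/|G|^{2g}) ∑_{x,y ∈ G^g} χ(w ∏ᵢ xᵢ yᵢ xᵢ⁻¹ yᵢ⁻¹) = χ(w) / d^{2g}` with `d = χ(1)`. -/
theorem finite_character_commutator_sum
    {G : Type*} [Group G] [Fintype G]
    {V : Type*} [AddCommGroup V] [Module ℂ V] [FiniteDimensional ℂ V]
    [Nontrivial V]
    (ρ : Representation ℂ G V)
    (hirr : ∀ W : Submodule ℂ V, (∀ g : G, W.map (ρ g) ≤ W) → W = ⊥ ∨ W = ⊤)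
    (χ : G → ℂ)
    (hχ : ∀ g, χ g = LinearMap.trace ℂ V (ρ g))
    (g : ℕ) (hg : 1 ≤ g) (w : G) :
    (1 / (Fintype.card G : ℂ) ^ (2 * g)) *
        ∑ x : Fin g → G, ∑ y : Fin g → G,
          χ (w * (List.ofFn fun i : Fin g => x i * y i * (x i)⁻¹ * (y i)⁻¹).prod) =
      χ w / χ 1 ^ (2 * g) := by
  simp only [hχ]
  rw [aux_master ρ hirr g w]
  rw [map_one ρ, LinearMap.trace_one]
  have hC : (Fintype.card G : ℂ) ≠ 0 := by exact_mod_cast Fintype.card_ne_zero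
  have hD : (Module.finrank ℂ V : ℂ) ≠ 0 := aux_d_ne_zero
  have hC2 : ((Fintype.card G : ℂ) ^ 2) ^ g ≠ 0 := pow_ne_zero _ (pow_ne_zero _ hC)
  have hD2 : ((Module.finrank ℂ V : ℂ) ^ 2) ^ g ≠ 0 := pow_ne_zero _ (pow_ne_zero _ hD)
  rw [pow_mul, pow_mul, div_pow]
  field_simp
end

section
/- Let G be a finite group, let F : G → ℂ be a class function (F(g·x·g⁻¹) = F(x) for all g, x ∈ G), and for each irreducible complex character χ of G set a_χ = (1/|G|) · ∑_{x ∈ G} F(x)·χ(x⁻¹). Then for every integer g ≥ 1 and every u ∈ G: (1/|G|^{2g}) · ∑_{(x,y) ∈ G^{2g}} F((∏_{i=1}^{g} x_i y_i x_i⁻¹ y_i⁻¹)·u⁻¹) = ∑_{χ ∈ Irr(G)} a_χ · χ(u⁻¹)/χ(1)^{2g}, where Irr(G) denotes the set of irreducible complex characters of G. -/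
/-- `χ : G → ℂ` is the character of some irreducible finite-dimensional complex
representation of `G`. -/
def IsIrrChar (G : Type*) [Group G] (χ : G → ℂ) : Prop :=
  ∃ (V : Type) (_ : AddCommGroup V) (_ : Module ℂ V),
    FiniteDimensional ℂ V ∧ Nontrivial V ∧
    ∃ ρ : Representation ℂ G V,
      (∀ W : Submodule ℂ V, (∀ g : G, W.map (ρ g) ≤ W) → W = ⊥ ∨ W = ⊤) ∧
      ∀ g, χ g = LinearMap.trace ℂ V (ρ g)

/-!
Expanding the class function `F = ∑ a_χ χ` in irreducible characters (they are orthogonal, and a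
class function orthogonal to all of them vanishes, as one sees on the regular representation)
reduces the claim to the case of an irreducible character `F = χ`. For an irreducible
representation `ρ` of degree `d`, Schur's lemma makes the central elements `∑ₓ ρ(x a x⁻¹)` and
`∑ₓ χ(x) ρ(x⁻¹)` scalars, namely `|G| χ(a) / d` and `|G| / d`. Hence
`∑_{x,y} ρ ⁅x, y⁆ = (|G| / d)² • 1`, and a product of `g` such sums gives `∑_{x,y} χ((∏ᵢ ⁅xᵢ, yᵢ⁆) w) = (|G| / d)^{2g} χ(w)`.
-/

open Module
open scoped commutatorElement

theorem sum_pi_fin_succ {α M : Type*} [Fintype α] [AddCommMonoid M] {n : ℕ}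
    (f : (Fin (n + 1) → α) → M) : ∑ x, f x = ∑ a, ∑ x, f (Fin.cons a x) := by
  rw [← (Fin.consEquiv fun _ => α).sum_comp, Fintype.sum_prod_type]
  rfl

/-- The relator of the fundamental group of a closed surface of genus `g`. -/
def commutatorProd {G : Type*} [Group G] {g : ℕ} (x y : Fin g → G) : G :=
  (List.ofFn fun i => ⁅x i, y i⁆).prod

theorem commutatorProd_cons {G : Type*} [Group G] {g : ℕ} (a b : G) (x y : Fin g → G) :
    commutatorProd (Fin.cons a x : Fin (g + 1) → G) (Fin.cons b y) =
      ⁅a, b⁆ * commutatorProd x y := by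
  simp [commutatorProd, List.ofFn_succ]

section ClassFunctions

variable (G : Type*) [Group G]

def classFunctions : Submodule ℂ (G → ℂ) where
  carrier := {f | ∀ g x, f (g * x * g⁻¹) = f x}
  add_mem' hf hf' g x := by simp [hf g x, hf' g x]
  zero_mem' _ _ := rfl
  smul_mem' c f hf g x := by simp [hf g x]

/-- On characters this is `|G|` times the usual inner product; the coefficients of the theorem are
`a_χ = classPairing G F χ / |G|`. -/
def classPairing [Fintype G] : LinearMap.BilinForm ℂ (G → ℂ) :=
  LinearMap.mk₂ ℂ (fun φ ψ => ∑ x, φ x * ψ x⁻¹)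
    (fun _ _ _ => by simp [add_mul, Finset.sum_add_distrib])
    (fun _ _ _ => by simp [Finset.mul_sum, mul_assoc])
    (fun _ _ _ => by simp [mul_add, Finset.sum_add_distrib])
    (fun _ _ _ => by simp [Finset.mul_sum, mul_left_comm])

variable {G}

theorem classPairing_apply [Fintype G] (φ ψ : G → ℂ) :
    classPairing G φ ψ = ∑ x, φ x * ψ x⁻¹ :=
  rfl

theorem Representation.character_mem_classFunctions {V : Type*} [AddCommGroup V] [Module ℂ V]
    (ρ : Representation ℂ G V) : ρ.character ∈ classFunctions G :=
  fun g x => ρ.char_conj x g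

end ClassFunctions

namespace Representation

section Irreducible

variable {G k V : Type*} [Monoid G] [Field k] [AddCommGroup V] [Module k V]

theorem isIrreducible_iff (ρ : Representation k G V) :
    IsIrreducible ρ ↔ Nontrivial V ∧
      ∀ W : Submodule k V, (∀ g, W.map (ρ g) ≤ W) → W = ⊥ ∨ W = ⊤ := by
  have invariant_iff (W : Submodule k V) (g : G) : W.map (ρ g) ≤ W ↔ ∀ v ∈ W, ρ g v ∈ W :=
    Submodule.map_le_iff_le_comap
  constructor
  · intro hρ
    refine ⟨?_, fun W hW => ?_⟩
    · by_contra hV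
      rw [not_nontrivial_iff_subsingleton] at hV
      exact bot_ne_top (α := Subrepresentation ρ) (Subrepresentation.ext (Subsingleton.elim _ _))
    · let p : Subrepresentation ρ := ⟨W, fun g => (invariant_iff W g).mp (hW g)⟩
      exact (eq_bot_or_eq_top p).imp (congrArg Subrepresentation.toSubmodule)
        (congrArg Subrepresentation.toSubmodule)
  · rintro ⟨hV, hirr⟩
    refine { exists_pair_ne := ⟨⊥, ⊤, fun h => ?_⟩, eq_bot_or_eq_top := fun p => ?_ }
    · exact bot_ne_top (congrArg Subrepresentation.toSubmodule h)
    · refine (hirr p.toSubmodule fun g => (invariant_iff _ g).mpr fun v hv =>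
        p.apply_mem_toSubmodule g hv).imp ?_ ?_ <;>
      exact fun h => Subrepresentation.ext h

theorem IsIrreducible.nontrivial (ρ : Representation k G V) [IsIrreducible ρ] : Nontrivial V :=
  ((isIrreducible_iff ρ).mp inferInstance).1

end Irreducible

section Schur

variable {G V : Type*} [Monoid G] [AddCommGroup V] [Module ℂ V] [FiniteDimensional ℂ V]
  {ρ : Representation ℂ G V} [IsIrreducible ρ]

theorem IsIrreducible.eq_smul_one_of_commute {T : Module.End ℂ V}
    (hT : ∀ g, Commute T (ρ g)) : T = (LinearMap.trace ℂ V T / finrank ℂ V) • 1 := by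
  have := IsIrreducible.nontrivial ρ
  let Tρ : IntertwiningMap ρ ρ :=
    T.intertwiningMap_of_isIntertwiningMap ρ ρ fun g v => congrArg (· v) (hT g)
  obtain ⟨c, hc⟩ :=
    IsIrreducible.algebraMap_intertwiningMap_bijective_of_isAlgClosed.surjective Tρ
  have hTc : T = c • 1 := (congrArg IntertwiningMap.toLinearMap hc).symm
  have hd : (finrank ℂ V : ℂ) ≠ 0 := Nat.cast_ne_zero.mpr finrank_pos.ne'
  rw [hTc, map_smul, LinearMap.trace_one, smul_eq_mul, mul_div_cancel_right₀ c hd]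

end Schur

section ClassSums

variable {G V : Type*} [Group G] [Fintype G] [AddCommGroup V] [Module ℂ V]
  (ρ : Representation ℂ G V)

theorem commute_sum_conj (a h : G) : Commute (∑ x, ρ (x * a * x⁻¹)) (ρ h) := by
  simp only [Commute, SemiconjBy, Finset.sum_mul, Finset.mul_sum, ← map_mul]
  exact Fintype.sum_equiv (Equiv.mulLeft h⁻¹) _ _ fun x => by simp [mul_assoc]

theorem commute_sum_smul_inv {f : G → ℂ} (hf : f ∈ classFunctions G) (h : G) :
    Commute (∑ x, f x • ρ x⁻¹) (ρ h) := by
  simp only [Commute, SemiconjBy, Finset.sum_mul, Finset.mul_sum, smul_mul_assoc,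
    mul_smul_comm, ← map_mul]
  refine Fintype.sum_equiv (MulAut.conj h⁻¹).toEquiv _ _ fun x => ?_
  rw [← hf h⁻¹ x]
  simp [mul_assoc]

variable [FiniteDimensional ℂ V] [IsIrreducible ρ]

theorem sum_conj_eq (a : G) :
    ∑ x, ρ (x * a * x⁻¹) = (Fintype.card G * ρ.character a / finrank ℂ V) • 1 := by
  have htrace (x : G) : LinearMap.trace ℂ V (ρ (x * a * x⁻¹)) = ρ.character a :=
    char_conj ρ a x
  rw [IsIrreducible.eq_smul_one_of_commute (commute_sum_conj ρ a), map_sum]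
  simp only [htrace, Finset.sum_const, Finset.card_univ, nsmul_eq_mul]

theorem sum_smul_inv_eq {f : G → ℂ} (hf : f ∈ classFunctions G) :
    ∑ x, f x • ρ x⁻¹ = (classPairing G f ρ.character / finrank ℂ V) • 1 := by
  rw [IsIrreducible.eq_smul_one_of_commute (commute_sum_smul_inv ρ hf), map_sum]
  simp [character, classPairing_apply]

end ClassSums

section Orthogonality

variable {G V W : Type*} [Group G] [Fintype G] [AddCommGroup V] [Module ℂ V]
  [FiniteDimensional ℂ V] [AddCommGroup W] [Module ℂ W] [FiniteDimensional ℂ W]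
  (ρ : Representation ℂ G V) [IsIrreducible ρ]

theorem classPairing_character_self :
    classPairing G ρ.character ρ.character = Fintype.card G := by
  have hcard : (Nat.card G : ℂ) ≠ 0 := Nat.cast_ne_zero.mpr Nat.card_pos.ne'
  have := invertibleOfNonzero hcard
  have h := char_orthonormal ρ ρ
  rw [if_pos ⟨Equiv.refl ρ⟩, inv_mul_eq_one₀ hcard, Nat.card_eq_fintype_card] at h
  exact h.symm

theorem classPairing_character_eq_zero (σ : Representation ℂ G W) [IsIrreducible σ]
    (hne : ρ.character ≠ σ.character) :
    classPairing G ρ.character σ.character = 0 := by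
  have hcard : (Nat.card G : ℂ) ≠ 0 := Nat.cast_ne_zero.mpr Nat.card_pos.ne'
  have := invertibleOfNonzero hcard
  have h := char_orthonormal ρ σ
  rw [if_neg fun ⟨φ⟩ => hne (char_iso φ).symm] at h
  exact (mul_eq_zero.mp h).resolve_left (inv_ne_zero hcard)

end Orthogonality

section Commutators

variable {G V : Type*} [Group G] [Fintype G] [AddCommGroup V] [Module ℂ V]
  [FiniteDimensional ℂ V] (ρ : Representation ℂ G V) [IsIrreducible ρ]

theorem sum_sum_commutator_eq :
    ∑ x : G, ∑ y : G, ρ ⁅x, y⁆ = ((Fintype.card G / finrank ℂ V : ℂ) ^ 2) • 1 := by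
  calc ∑ x : G, ∑ y : G, ρ ⁅x, y⁆ = ∑ y, (∑ x, ρ (x * y * x⁻¹)) * ρ y⁻¹ := by
        rw [Finset.sum_comm]
        simp [commutatorElement_def, Finset.sum_mul]
    _ = (Fintype.card G / finrank ℂ V : ℂ) • ∑ y, ρ.character y • ρ y⁻¹ := by
        simp only [sum_conj_eq, Finset.smul_sum, smul_smul, smul_one_mul]
        congr! 2
        ring
    _ = _ := by
        rw [sum_smul_inv_eq ρ ρ.character_mem_classFunctions, classPairing_character_self,
          smul_smul, sq]

theorem sum_sum_commutatorProd_eq (g : ℕ) :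
    ∑ x : Fin g → G, ∑ y : Fin g → G, ρ (commutatorProd x y) =
      ((Fintype.card G / finrank ℂ V : ℂ) ^ (2 * g)) • 1 := by
  induction g with
  | zero => simp [commutatorProd]
  | succ g ih =>
    calc ∑ x : Fin (g + 1) → G, ∑ y : Fin (g + 1) → G, ρ (commutatorProd x y)
        = ∑ a, ∑ x : Fin g → G, ∑ b, ∑ y : Fin g → G, ρ ⁅a, b⁆ * ρ (commutatorProd x y) := by
          simp only [sum_pi_fin_succ (n := g), commutatorProd_cons, map_mul]
          rfl
      _ = (∑ a, ∑ b, ρ ⁅a, b⁆) * ∑ x : Fin g → G, ∑ y : Fin g → G, ρ (commutatorProd x y) := by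
          simp only [Finset.sum_mul_sum]
          rfl
      _ = _ := by
          rw [ih, sum_sum_commutator_eq, smul_mul_smul_comm, one_mul, ← pow_add]
          ring_nf

theorem sum_sum_character_commutatorProd_mul (g : ℕ) (w : G) :
    ∑ x : Fin g → G, ∑ y : Fin g → G, ρ.character (commutatorProd x y * w) =
      (Fintype.card G / finrank ℂ V : ℂ) ^ (2 * g) * ρ.character w := by
  have h := congrArg (fun T => LinearMap.trace ℂ V (T * ρ w)) (sum_sum_commutatorProd_eq ρ g)
  simpa [Finset.sum_mul, map_sum, character] using h

end Commutators

end Representation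

namespace Subrepresentation

variable {G V : Type*} [Group G] [Fintype G] [AddCommGroup V] [Module ℂ V]
  {ρ : Representation ℂ G V}

theorem coe_sum_smul_inv_apply (p : Subrepresentation ρ) (f : G → ℂ)
    (v : p.toSubmodule) :
    ((∑ x, f x • p.toRepresentation x⁻¹) v : V) = (∑ x, f x • ρ x⁻¹) v := by
  simp [LinearMap.sum_apply, Subrepresentation.toRepresentation]

theorem sum_smul_inv_eq_zero_of_isCompl {p q : Subrepresentation ρ} (hpq : IsCompl p q)
    {f : G → ℂ} (hp : ∑ x, f x • p.toRepresentation x⁻¹ = 0)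
    (hq : ∑ x, f x • q.toRepresentation x⁻¹ = 0) : ∑ x, f x • ρ x⁻¹ = 0 := by
  ext v
  have hv : v ∈ (p ⊔ q).toSubmodule := by
    rw [hpq.sup_eq_top]
    exact Submodule.mem_top
  obtain ⟨a, ha, b, hb, rfl⟩ := Submodule.mem_sup.mp hv
  rw [map_add, ← p.coe_sum_smul_inv_apply f ⟨a, ha⟩, ← q.coe_sum_smul_inv_apply f ⟨b, hb⟩,
    hp, hq]
  simp

end Subrepresentation

section IrreducibleCharacters

variable {G : Type*} [Group G]

theorem isIrrChar_iff {χ : G → ℂ} :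
    IsIrrChar G χ ↔ ∃ (V : Type) (_ : AddCommGroup V) (_ : Module ℂ V)
      (_ : FiniteDimensional ℂ V) (ρ : Representation ℂ G V),
        ρ.IsIrreducible ∧ ρ.character = χ := by
  constructor
  · rintro ⟨V, _, _, hfin, hV, ρ, hirr, hχ⟩
    exact ⟨V, _, _, hfin, ρ, ρ.isIrreducible_iff.mpr ⟨hV, hirr⟩, (funext hχ).symm⟩
  · rintro ⟨V, _, _, hfin, ρ, hρ, rfl⟩
    obtain ⟨hV, hirr⟩ := ρ.isIrreducible_iff.mp hρ
    exact ⟨V, _, _, hfin, hV, ρ, hirr, fun _ => rfl⟩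

theorem isIrrChar_character {V : Type} [AddCommGroup V] [Module ℂ V] [FiniteDimensional ℂ V]
    (ρ : Representation ℂ G V) [ρ.IsIrreducible] : IsIrrChar G ρ.character :=
  isIrrChar_iff.mpr ⟨V, _, _, inferInstance, ρ, inferInstance, rfl⟩

namespace IsIrrChar

variable {χ ψ : G → ℂ}

theorem mem_classFunctions (hχ : IsIrrChar G χ) : χ ∈ classFunctions G := by
  obtain ⟨V, _, _, _, ρ, _, rfl⟩ := isIrrChar_iff.mp hχ
  exact ρ.character_mem_classFunctions

theorem map_one_ne_zero (hχ : IsIrrChar G χ) : χ 1 ≠ 0 := by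
  obtain ⟨V, _, _, _, ρ, _, rfl⟩ := isIrrChar_iff.mp hχ
  have := Representation.IsIrreducible.nontrivial ρ
  simpa using finrank_pos.ne'

variable [Fintype G]

theorem classPairing_eq (hχ : IsIrrChar G χ) (hψ : IsIrrChar G ψ) :
    classPairing G χ ψ = if χ = ψ then (Fintype.card G : ℂ) else 0 := by
  obtain ⟨V, _, _, _, ρ, _, rfl⟩ := isIrrChar_iff.mp hχ
  obtain ⟨W, _, _, _, σ, _, rfl⟩ := isIrrChar_iff.mp hψ
  split_ifs with h
  · rw [h]
    exact σ.classPairing_character_self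
  · exact ρ.classPairing_character_eq_zero σ h

theorem sum_sum_commutatorProd_mul (hχ : IsIrrChar G χ) (g : ℕ) (w : G) :
    ∑ x : Fin g → G, ∑ y : Fin g → G, χ (commutatorProd x y * w) =
      (Fintype.card G / χ 1) ^ (2 * g) * χ w := by
  obtain ⟨V, _, _, _, ρ, _, rfl⟩ := isIrrChar_iff.mp hχ
  rw [Representation.char_one]
  exact ρ.sum_sum_character_commutatorProd_mul g w

end IsIrrChar

variable (G) [Fintype G]

theorem finite_setOf_isIrrChar : {χ : G → ℂ | IsIrrChar G χ}.Finite := by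
  refine LinearIndependent.setFinite
    (LinearMap.BilinForm.linearIndependent_of_iIsOrtho (B := classPairing G) ?_ ?_)
  · intro χ ψ hne
    simpa [Subtype.coe_ne_coe.mpr hne] using IsIrrChar.classPairing_eq χ.2 ψ.2
  · intro χ
    simp [IsIrrChar.classPairing_eq χ.2 χ.2]

section Completeness

variable {G}

theorem sum_smul_inv_eq_zero_of_forall_classPairing_eq_zero {f : G → ℂ}
    (hf : f ∈ classFunctions G) (horth : ∀ χ, IsIrrChar G χ → classPairing G f χ = 0)
    {V : Type} [AddCommGroup V] [Module ℂ V] [FiniteDimensional ℂ V]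
    (ρ : Representation ℂ G V) : ∑ x, f x • ρ x⁻¹ = 0 := by
  induction hn : finrank ℂ V using Nat.strong_induction_on generalizing V with
  | _ n ih =>
  rcases subsingleton_or_nontrivial V with hV | hV
  · exact Subsingleton.elim _ _
  by_cases hρ : ρ.IsIrreducible
  · rw [ρ.sum_smul_inv_eq hf, horth _ (isIrrChar_character ρ), zero_div, zero_smul]
  obtain ⟨p, hp_bot, hp_top⟩ : ∃ p : Subrepresentation ρ, p ≠ ⊥ ∧ p ≠ ⊤ := by
    by_contra! h
    refine hρ ((isSimpleOrder_iff _).mpr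
      ⟨⟨⊥, ⊤, fun h => ?_⟩, fun p => or_iff_not_imp_left.mpr (h p)⟩)
    exact bot_ne_top (congrArg Subrepresentation.toSubmodule h)
  obtain ⟨q, hpq⟩ := exists_isCompl p
  have hq_top : q ≠ ⊤ := fun h => hp_bot (disjoint_top.mp (h ▸ hpq.disjoint))
  have finrank_lt {r : Subrepresentation ρ} (hr : r ≠ ⊤) : finrank ℂ r.toSubmodule < n :=
    hn ▸ Submodule.finrank_lt fun h => hr (Subrepresentation.ext h)
  exact Subrepresentation.sum_smul_inv_eq_zero_of_isCompl hpq
    (ih _ (finrank_lt hp_top) _ rfl) (ih _ (finrank_lt hq_top) _ rfl)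

theorem eq_zero_of_forall_classPairing_eq_zero {f : G → ℂ} (hf : f ∈ classFunctions G)
    (horth : ∀ χ, IsIrrChar G χ → classPairing G f χ = 0) : f = 0 := by
  classical
  -- `IsIrrChar` only sees representations on spaces in `Type`, so the left regular
  -- representation is first transported to `Fin n → ℂ`.
  let e := (Module.finBasis ℂ (MonoidAlgebra ℂ G)).equivFun
  let ρ : Representation ℂ G (Fin _ → ℂ) :=
    (e.conjAlgEquiv ℂ).toAlgHom.toMonoidHom.comp (Representation.leftRegular ℂ G)
  have hreg : ∑ x, f x • Representation.leftRegular ℂ G x⁻¹ = 0 :=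
    (e.conjAlgEquiv ℂ).injective <| by
      simpa [ρ, map_sum] using sum_smul_inv_eq_zero_of_forall_classPairing_eq_zero hf horth ρ
  ext s
  have := congrArg (fun T => (T (MonoidAlgebra.single 1 1)).coeff s⁻¹) hreg
  simpa [Finsupp.finsetSum_apply, Finsupp.single_apply, inv_inj] using this

theorem eq_sum_classPairing_smul {F : G → ℂ} (hF : F ∈ classFunctions G) :
    F = ∑ χ ∈ (finite_setOf_isIrrChar G).toFinset, (classPairing G F χ / Fintype.card G) • χ := by
  rw [← sub_eq_zero]
  refine eq_zero_of_forall_classPairing_eq_zero (sub_mem hF (sum_mem fun χ hχ => ?_))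
    fun ψ hψ => ?_
  · exact Submodule.smul_mem _ _ (IsIrrChar.mem_classFunctions (by simpa using hχ))
  · rw [LinearMap.BilinForm.sub_left, LinearMap.BilinForm.sum_left]
    simp only [LinearMap.BilinForm.smul_left]
    rw [Finset.sum_congr rfl fun χ hχ => by
      rw [IsIrrChar.classPairing_eq (by simpa using hχ) hψ]]
    simp [Finset.sum_ite_eq', hψ]

end Completeness

end IrreducibleCharacters

theorem finite_partition_function_class_function_general
    {G : Type*} [Group G] [Fintype G]
    (F : G → ℂ) (hF : ∀ g x : G, F (g * x * g⁻¹) = F x)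
    (a : (G → ℂ) → ℂ)
    (ha : ∀ χ : G → ℂ, a χ = (1 / (Fintype.card G : ℂ)) * ∑ x : G, F x * χ x⁻¹)
    (g : ℕ) (u : G) :
    (1 / (Fintype.card G : ℂ) ^ (2 * g)) *
        ∑ x : Fin g → G, ∑ y : Fin g → G,
          F ((List.ofFn fun i : Fin g => x i * y i * (x i)⁻¹ * (y i)⁻¹).prod * u⁻¹) =
      ∑ᶠ χ ∈ {χ : G → ℂ | IsIrrChar G χ}, a χ * χ u⁻¹ / χ 1 ^ (2 * g) := by
  have hcoeff (χ : G → ℂ) : a χ = classPairing G F χ / Fintype.card G := by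
    rw [ha, classPairing_apply, one_div_mul_eq_div]
  have hexp : F = ∑ χ ∈ (finite_setOf_isIrrChar G).toFinset, a χ • χ := by
    simpa only [hcoeff] using eq_sum_classPairing_smul hF
  have hrelator (x y : Fin g → G) :
      (List.ofFn fun i => x i * y i * (x i)⁻¹ * (y i)⁻¹).prod = commutatorProd x y := rfl
  rw [finsum_mem_eq_finite_toFinset_sum _ (finite_setOf_isIrrChar G)]
  simp only [hrelator]
  conv_lhs => rw [hexp]
  simp only [Finset.sum_apply, Pi.smul_apply, smul_eq_mul]
  rw [Finset.sum_congr rfl fun x _ => Finset.sum_comm, Finset.sum_comm, Finset.mul_sum]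
  refine Finset.sum_congr rfl fun χ hχ => ?_
  have hχ : IsIrrChar G χ := by simpa using hχ
  simp only [← Finset.mul_sum]
  rw [hχ.sum_sum_commutatorProd_mul, div_pow]
  have := hχ.map_one_ne_zero
  field_simp

/-- Finite-group form of the evaluation of the partition function `Z(u)` of a bundle of
topological type `u` on a genus-`g` surface: for a class function `F` with Fourier
coefficients `a_χ = (1/|G|) ∑_x F(x) χ(x⁻¹)`,
`(1/|G|^{2g}) ∑_{x,y} F((∏ᵢ xᵢ yᵢ xᵢ⁻¹ yᵢ⁻¹) u⁻¹) = ∑_{χ ∈ Irr G} a_χ χ(u⁻¹)/χ(1)^{2g}`. -/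
theorem finite_partition_function_class_function
    {G : Type*} [Group G] [Fintype G]
    (F : G → ℂ) (hF : ∀ g x : G, F (g * x * g⁻¹) = F x)
    (a : (G → ℂ) → ℂ)
    (ha : ∀ χ : G → ℂ, a χ = (1 / (Fintype.card G : ℂ)) * ∑ x : G, F x * χ x⁻¹)
    (g : ℕ) (hg : 1 ≤ g) (u : G) :
    (1 / (Fintype.card G : ℂ) ^ (2 * g)) *
        ∑ x : Fin g → G, ∑ y : Fin g → G,
          F ((List.ofFn fun i : Fin g => x i * y i * (x i)⁻¹ * (y i)⁻¹).prod * u⁻¹) =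
      ∑ᶠ χ ∈ {χ : G → ℂ | IsIrrChar G χ}, a χ * χ u⁻¹ / χ 1 ^ (2 * g) :=
  finite_partition_function_class_function_general F hF a ha g u
end

section
/- Let G be a finite group, let χ_σ and χ_μ be characters of irreducible finite-dimensional complex representations of G with degrees d_σ = χ_σ(1), d_μ = χ_μ(1), and let u be an element of the center of G. Then for every integer g ≥ 1: (1/|G|^{2g}) · ∑_{(x,y) ∈ G^{2g}} χ_σ(x_1) · χ_μ((∏_{i=1}^{g} x_i y_i x_i⁻¹ y_i⁻¹)·u⁻¹) = m · χ_μ(u⁻¹)/d_μ^{2g}, where m = (1/|G|) · ∑_{x ∈ G} χ_σ(x)·χ_μ(x)·χ_μ(x⁻¹) (the multiplicity D_{σμμ} of μ in σ ⊗ μ). -/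
/-!
By Schur's lemma, averaging `ρ y * A * ρ y⁻¹` over `G` gives `(|G| tr A / d) • 1`, and the
class-function operator `∑ x, χ(x⁻¹) • ρ x` is `(|G| / d) • 1` by orthonormality of `χ`.
Hence summing `χ(⁅a, b⁆ * w)` over a handle `(a, b)` gives `(|G| / d)^2 χ(w)`, so the `g - 1`
handles away from the Wilson line contribute `(|G| / d)^(2(g-1))`. On the remaining handle
`∑_b χμ(⁅a, b⁆ u⁻¹) = |G| χμ(a⁻¹) χμ(u⁻¹ a) / d`, and `ρμ u` is a scalar because `u` is central,
so `χμ(u⁻¹ a) = χμ(u⁻¹) χμ(a) / d`.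
-/

open Finset LinearMap Module
open scoped commutatorElement

def prodCommutators {G : Type*} [Group G] {n : ℕ} (x y : Fin n → G) : G :=
  (List.ofFn fun i => ⁅x i, y i⁆).prod

section Sums

variable {G : Type*} [Group G] {n : ℕ}

theorem prodCommutators_cons (a b : G) (x y : Fin n → G) :
    prodCommutators (Fin.cons a x : Fin (n + 1) → G) (Fin.cons b y) =
      ⁅a, b⁆ * prodCommutators x y := by
  simp [prodCommutators, List.ofFn_succ]

theorem sum_fin_succ_pi {α M : Type*} [Fintype α] [AddCommMonoid M]
    (f : (Fin (n + 1) → α) → M) :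
    ∑ x, f x = ∑ a, ∑ x : Fin n → α, f (Fin.cons a x) := by
  rw [← (Fin.consEquiv fun _ => α).sum_comp, Fintype.sum_prod_type]
  rfl

variable [Fintype G]

theorem sum_sum_prodCommutators_succ {M : Type*} [AddCommMonoid M] (F : G → G → M) :
    ∑ x : Fin (n + 1) → G, ∑ y : Fin (n + 1) → G, F (x 0) (prodCommutators x y) =
      ∑ a, ∑ b, ∑ x : Fin n → G, ∑ y : Fin n → G, F a (⁅a, b⁆ * prodCommutators x y) := by
  simp only [sum_fin_succ_pi, prodCommutators_cons, Fin.cons_zero]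
  exact sum_congr rfl fun a _ => sum_comm

end Sums

namespace Representation

variable {G k V : Type*} [Group G] [Field k] [AddCommGroup V] [Module k V]
  (ρ : Representation k G V)

theorem isIrreducible_of_forall_map_le [Nontrivial V]
    (h : ∀ W : Submodule k V, (∀ g : G, W.map (ρ g) ≤ W) → W = ⊥ ∨ W = ⊤) :
    ρ.IsIrreducible where
  exists_pair_ne := ⟨⊥, ⊤, fun h => bot_ne_top (congrArg Subrepresentation.toSubmodule h)⟩
  eq_bot_or_eq_top W :=
    (h W.toSubmodule fun g => Submodule.map_le_iff_le_comap.2 fun _ hv =>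
      W.apply_mem_toSubmodule g hv).imp Subrepresentation.ext Subrepresentation.ext

theorem IsIrreducible.nontrivial_s10 [ρ.IsIrreducible] : Nontrivial V := by
  by_contra hV
  rw [not_nontrivial_iff_subsingleton] at hV
  exact bot_ne_top (α := Subrepresentation ρ) (Subrepresentation.ext (Subsingleton.elim _ _))

variable [FiniteDimensional k V] [IsAlgClosed k] [CharZero k] [ρ.IsIrreducible]

theorem eq_trace_div_finrank_smul_one_of_commute (T : V →ₗ[k] V)
    (hT : ∀ g, Commute T (ρ g)) : T = (trace k V T / finrank k V) • 1 := by
  obtain ⟨c, hc⟩ :=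
    IsIrreducible.algebraMap_intertwiningMap_bijective_of_isAlgClosed.2 ⟨T, hT⟩
  replace hc : c • 1 = T := congrArg IntertwiningMap.toLinearMap hc
  have := IsIrreducible.nontrivial_s10 ρ
  have hd : (finrank k V : k) ≠ 0 := Nat.cast_ne_zero.2 finrank_pos.ne'
  rw [← hc, map_smul, trace_one, smul_eq_mul, mul_div_cancel_right₀ _ hd]

theorem character_mul_of_mem_center {u : G} (hu : u ∈ Subgroup.center G) (x : G) :
    ρ.character (u * x) = ρ.character u * ρ.character x / finrank k V := by
  have hcomm : ∀ g, Commute (ρ u) (ρ g) := fun g => by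
    rw [Commute, SemiconjBy, ← map_mul, ← map_mul, Subgroup.mem_center_iff.1 hu g]
  rw [character, map_mul, eq_trace_div_finrank_smul_one_of_commute ρ _ hcomm, smul_mul_assoc,
    one_mul, map_smul, smul_eq_mul, div_mul_eq_mul_div]
  rfl

variable [Fintype G]

theorem sum_mul_mul_inv_eq_smul_one (A : V →ₗ[k] V) :
    ∑ x, ρ x * A * ρ x⁻¹ = (Fintype.card G * trace k V A / finrank k V) • 1 := by
  have hcomm : ∀ g, Commute (∑ x, ρ x * A * ρ x⁻¹) (ρ g) := fun g => by
    rw [Commute, SemiconjBy, Finset.sum_mul, Finset.mul_sum]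
    refine Fintype.sum_equiv (Equiv.mulLeft g⁻¹) _ _ fun x => ?_
    rw [Equiv.coe_mulLeft, mul_inv_rev, inv_inv, map_mul ρ x⁻¹, ← mul_assoc, ← mul_assoc,
      ← mul_assoc, ← map_mul, mul_inv_cancel_left]
  have htrace : trace k V (∑ x, ρ x * A * ρ x⁻¹) = Fintype.card G * trace k V A := by
    have h (x : G) : trace k V (ρ x * A * ρ x⁻¹) = trace k V A := by
      rw [trace_mul_cycle, ← map_mul, inv_mul_cancel, map_one, one_mul]
    simp only [map_sum, h, sum_const, card_univ, nsmul_eq_mul]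
  rw [eq_trace_div_finrank_smul_one_of_commute ρ _ hcomm, htrace]

theorem sum_character_mul_conj (a c : G) :
    ∑ y, ρ.character (a * (y * c * y⁻¹)) =
      Fintype.card G * ρ.character c / finrank k V * ρ.character a := by
  have := congrArg (fun T => trace k V (ρ a * T)) (sum_mul_mul_inv_eq_smul_one ρ (ρ c))
  simp only [Finset.mul_sum, map_sum, mul_smul_comm, mul_one, map_smul, smul_eq_mul,
    ← map_mul] at this
  exact this

theorem sum_character_mul_character_inv_self :
    ∑ x, ρ.character x * ρ.character x⁻¹ = Fintype.card G := by
  have : Invertible (Nat.card G : k) := invertibleOfNonzero (Nat.cast_ne_zero.2 Nat.card_pos.ne')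
  have h := char_orthonormal ρ ρ
  rw [if_pos ⟨Equiv.refl ρ⟩, Nat.card_eq_fintype_card,
    inv_mul_eq_one₀ (Nat.cast_ne_zero.2 Fintype.card_ne_zero)] at h
  exact h.symm

theorem sum_character_mul_character_inv (a : G) :
    ∑ x, ρ.character (a * x) * ρ.character x⁻¹ =
      Fintype.card G / finrank k V * ρ.character a := by
  set T := ∑ x, ρ.character x⁻¹ • ρ x
  have hcomm : ∀ g, Commute T (ρ g) := fun g => by
    rw [Commute, SemiconjBy, Finset.sum_mul, Finset.mul_sum]
    refine (Fintype.sum_equiv (MulAut.conj g).toEquiv _ _ fun x => ?_).symm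
    simp only [MulEquiv.toEquiv_eq_coe, MulEquiv.coe_toEquiv, MulAut.conj_apply, mul_smul_comm,
      smul_mul_assoc, ← map_mul, mul_inv_rev, inv_inv, inv_mul_cancel_right]
    rw [← mul_assoc, char_conj]
  have htrace : trace k V T = Fintype.card G := by
    simp only [T, map_sum, map_smul, smul_eq_mul]
    exact ρ.sum_character_mul_character_inv_self ▸ sum_congr rfl fun x _ => mul_comm _ _
  have hT := eq_trace_div_finrank_smul_one_of_commute ρ T hcomm
  rw [htrace] at hT
  have := congrArg (fun S => trace k V (ρ a * S)) hT
  simp only [T, Finset.mul_sum, map_sum, mul_smul_comm, map_smul, smul_eq_mul, ← map_mul,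
    mul_one] at this
  exact (sum_congr rfl fun x _ => mul_comm _ _).trans this

theorem sum_character_commutatorElement_mul (a w : G) :
    ∑ b : G, ρ.character (⁅a, b⁆ * w) =
      Fintype.card G * ρ.character a⁻¹ / finrank k V * ρ.character (w * a) := by
  rw [← sum_character_mul_conj]
  refine sum_congr rfl fun b _ => ?_
  rw [char_mul_comm, commutatorElement_def]
  group

theorem sum_sum_character_commutatorElement_mul (w : G) :
    ∑ a : G, ∑ b : G, ρ.character (⁅a, b⁆ * w) =
      (Fintype.card G / finrank k V) ^ 2 * ρ.character w := by
  simp only [sum_character_commutatorElement_mul]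
  calc _ = Fintype.card G / finrank k V * ∑ a, ρ.character (w * a) * ρ.character a⁻¹ := by
        rw [mul_sum]
        exact sum_congr rfl fun a _ => by ring
    _ = _ := by
        rw [sum_character_mul_character_inv]
        ring

theorem sum_sum_character_mul_prodCommutators_mul (n : ℕ) (h w : G) :
    ∑ x : Fin n → G, ∑ y : Fin n → G, ρ.character (h * prodCommutators x y * w) =
      (Fintype.card G / finrank k V) ^ (2 * n) * ρ.character (h * w) := by
  induction n generalizing h with
  | zero => simp [prodCommutators]
  | succ n ih =>
    rw [sum_sum_prodCommutators_succ fun _ p => ρ.character (h * p * w)]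
    simp only [← mul_assoc h, ih, ← mul_sum]
    have hcyc (a b : G) : ρ.character (h * ⁅a, b⁆ * w) = ρ.character (⁅a, b⁆ * (w * h)) := by
      rw [mul_assoc, char_mul_comm, mul_assoc]
    simp only [hcyc, sum_sum_character_commutatorElement_mul, char_mul_comm ρ h w]
    ring

end Representation

theorem finite_wilson_line_noncontractible_general
    {G : Type*} [Group G] [Fintype G]
    {Vμ : Type*} [AddCommGroup Vμ] [Module ℂ Vμ] [FiniteDimensional ℂ Vμ]
    [Nontrivial Vμ]
    (ρμ : Representation ℂ G Vμ)
    (hirrμ : ∀ W : Submodule ℂ Vμ, (∀ g : G, W.map (ρμ g) ≤ W) → W = ⊥ ∨ W = ⊤)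
    (χσ χμ : G → ℂ)
    (hχμ : ∀ g, χμ g = LinearMap.trace ℂ Vμ (ρμ g))
    (u : G) (hu : u ∈ Subgroup.center G)
    (g : ℕ) (hg : 0 < g)
    (m : ℂ) (hm : m = (1 / (Fintype.card G : ℂ)) * ∑ x : G, χσ x * χμ x * χμ x⁻¹) :
    (1 / (Fintype.card G : ℂ) ^ (2 * g)) *
        ∑ x : Fin g → G, ∑ y : Fin g → G,
          χσ (x ⟨0, hg⟩) *
            χμ ((List.ofFn fun i : Fin g => x i * y i * (x i)⁻¹ * (y i)⁻¹).prod * u⁻¹) =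
      m * χμ u⁻¹ / χμ 1 ^ (2 * g) := by
  obtain ⟨n, rfl⟩ : ∃ n, g = n + 1 := ⟨g - 1, by omega⟩
  have := ρμ.isIrreducible_of_forall_map_le hirrμ
  obtain rfl : χμ = ρμ.character := funext hχμ
  have hcard : (Fintype.card G : ℂ) ≠ 0 := Nat.cast_ne_zero.2 Fintype.card_ne_zero
  have hd : (finrank ℂ Vμ : ℂ) ≠ 0 := Nat.cast_ne_zero.2 finrank_pos.ne'
  change 1 / _ * ∑ x : Fin (n + 1) → G, ∑ y : Fin (n + 1) → G,
    χσ (x 0) * ρμ.character (prodCommutators x y * u⁻¹) = _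
  rw [sum_sum_prodCommutators_succ fun a p => χσ a * ρμ.character (p * u⁻¹)]
  simp only [← mul_sum, ρμ.sum_sum_character_mul_prodCommutators_mul,
    ρμ.sum_character_commutatorElement_mul,
    ρμ.character_mul_of_mem_center (Subgroup.inv_mem _ hu), hm]
  rw [ρμ.char_one, mul_sum, mul_sum, sum_mul, sum_div]
  refine sum_congr rfl fun a _ => ?_
  rw [div_pow]
  field_simp
  ring

/-- Finite-group form of the Wilson-line expectation for a non-contractible,
homologically non-trivial loop on a genus-`g` surface, on a bundle of topological
type `u` (an element of the center):
`(1/|G|^{2g}) ∑_{x,y} χ_σ(x₁) χ_μ((∏ᵢ xᵢ yᵢ xᵢ⁻¹ yᵢ⁻¹) u⁻¹) = m χ_μ(u⁻¹)/d_μ^{2g}`,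
where `m = (1/|G|) ∑_x χ_σ(x) χ_μ(x) χ_μ(x⁻¹)` is the Clebsch–Gordan coefficient. -/
theorem finite_wilson_line_noncontractible
    {G : Type*} [Group G] [Fintype G]
    {Vσ : Type*} [AddCommGroup Vσ] [Module ℂ Vσ] [FiniteDimensional ℂ Vσ]
    [Nontrivial Vσ]
    {Vμ : Type*} [AddCommGroup Vμ] [Module ℂ Vμ] [FiniteDimensional ℂ Vμ]
    [Nontrivial Vμ]
    (ρσ : Representation ℂ G Vσ) (ρμ : Representation ℂ G Vμ)
    (hirrσ : ∀ W : Submodule ℂ Vσ, (∀ g : G, W.map (ρσ g) ≤ W) → W = ⊥ ∨ W = ⊤)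
    (hirrμ : ∀ W : Submodule ℂ Vμ, (∀ g : G, W.map (ρμ g) ≤ W) → W = ⊥ ∨ W = ⊤)
    (χσ χμ : G → ℂ)
    (hχσ : ∀ g, χσ g = LinearMap.trace ℂ Vσ (ρσ g))
    (hχμ : ∀ g, χμ g = LinearMap.trace ℂ Vμ (ρμ g))
    (u : G) (hu : u ∈ Subgroup.center G)
    (g : ℕ) (hg : 0 < g)
    (m : ℂ) (hm : m = (1 / (Fintype.card G : ℂ)) * ∑ x : G, χσ x * χμ x * χμ x⁻¹) :
    (1 / (Fintype.card G : ℂ) ^ (2 * g)) *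
        ∑ x : Fin g → G, ∑ y : Fin g → G,
          χσ (x ⟨0, hg⟩) *
            χμ ((List.ofFn fun i : Fin g => x i * y i * (x i)⁻¹ * (y i)⁻¹).prod * u⁻¹) =
      m * χμ u⁻¹ / χμ 1 ^ (2 * g) :=
  finite_wilson_line_noncontractible_general ρμ hirrμ χσ χμ hχμ u hu g hg m hm
end

section
/- Let Γ be a finite abelian group with dual group Γ̂ = Hom(Γ, ℂ×) (the finite set of group homomorphisms Γ → ℂ×), let I be a type, let w : I → ℂ be summable, and let λ : I → Γ̂. Define Z : Γ → ℂ by Z(u) = ∑'_{μ ∈ I} w(μ)·λ(μ)(u⁻¹), and for θ ∈ Γ̂ set S_θ = ∑'_{μ ∈ I, λ(μ) = θ} w(μ). For f : Γ → ℂ define its Fourier coefficients by f̂(θ) = (1/|Γ|) · ∑_{u ∈ Γ} f(u)·θ(u⁻¹). If S_𝟙 ≠ 0, where 𝟙 ∈ Γ̂ is the trivial homomorphism, then (∑_{u ∈ Γ} f(u)·Z(u)) / (∑_{u ∈ Γ} Z(u)) = (∑_{θ ∈ Γ̂} f̂(θ)·S_θ) / S_𝟙. -/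
/-!
Grouping the series defining `Z` by the value of `λ` gives the finite Fourier expansion
`Z(u) = ∑_θ S_θ θ(u⁻¹)`. Pairing it with `f` turns `θ(u⁻¹)` into `|Γ| f̂(θ)`, and pairing it with
`1` leaves `|Γ| S_𝟙` by orthogonality of characters; the factor `|Γ|` cancels.
-/

theorem hasSum_mul_comp_fiberwise {ι α R : Type*} [Fintype α] [Ring R] [UniformSpace R]
    [IsUniformAddGroup R] [CompleteSpace R] [IsTopologicalRing R]
    {w : ι → R} (hw : Summable w) (lam : ι → α) (g : α → R) :
    HasSum (fun i => w i * g (lam i)) (∑ a, (∑' i : {i // lam i = a}, w i) * g a) := by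
  have hfiber (a : α) :
      HasSum (fun i => {i | lam i = a}.indicator w i * g a)
        ((∑' i : {i // lam i = a}, w i) * g a) := by
    refine HasSum.mul_right _ ?_
    have := (hw.indicator {i | lam i = a}).hasSum
    rwa [← tsum_subtype] at this
  convert hasSum_sum fun a _ => hfiber a using 2 with i
  rw [Finset.sum_eq_single (lam i)]
  · simp
  · intro a _ ha
    rw [Set.indicator_of_notMem fun h => ha h.symm, zero_mul]
  · simp

theorem sum_units_apply_inv_eq_ite {G R : Type*} [Group G] [Fintype G] [CommRing R]
    [IsDomain R] (θ : G →* Rˣ) [Decidable (θ = 1)] :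
    ∑ u, (θ u⁻¹ : R) = if θ = 1 then (Fintype.card G : R) else 0 := by
  rw [← Equiv.sum_comp (Equiv.inv G)]
  simp only [Equiv.inv_apply, inv_inv]
  split_ifs with h
  · simp [h]
  · refine sum_hom_units_eq_zero ((Units.coeHom R).comp θ) fun h' => h ?_
    ext u
    exact DFunLike.congr_fun h' u

theorem expected_topological_type_general
    {Γ : Type*} [CommGroup Γ] [Fintype Γ]
    {I : Type*} (w : I → ℂ) (hw : Summable w)
    (lam : I → (Γ →* ℂˣ))
    (Z : Γ → ℂ)
    (hZ : ∀ u : Γ, Z u = ∑' μ : I, w μ * ((lam μ) u⁻¹ : ℂ))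
    (S : (Γ →* ℂˣ) → ℂ)
    (hS : ∀ θ : Γ →* ℂˣ, S θ = ∑' μ : {μ : I // lam μ = θ}, w μ.val)
    (f : Γ → ℂ)
    (fhat : (Γ →* ℂˣ) → ℂ)
    (hfhat : ∀ θ : Γ →* ℂˣ,
      fhat θ = (1 / (Fintype.card Γ : ℂ)) * ∑ u : Γ, f u * (θ u⁻¹ : ℂ)) :
    (∑ u : Γ, f u * Z u) / (∑ u : Γ, Z u) =
      (∑ᶠ θ : Γ →* ℂˣ, fhat θ * S θ) / S 1 := by
  classical
  have : Fintype (Γ →* ℂˣ) := Fintype.ofFinite _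
  have hcard : (Fintype.card Γ : ℂ) ≠ 0 := Nat.cast_ne_zero.mpr Fintype.card_ne_zero
  have hZ_fourier (u : Γ) : Z u = ∑ θ, S θ * (θ u⁻¹ : ℂ) := by
    simp only [hZ u, (hasSum_mul_comp_fiberwise hw lam fun θ => (θ u⁻¹ : ℂ)).tsum_eq, hS]
  have hpair (F : Γ → ℂ) : ∑ u, F u * Z u = ∑ θ, S θ * ∑ u, F u * (θ u⁻¹ : ℂ) := by
    simp only [hZ_fourier, Finset.mul_sum]
    rw [Finset.sum_comm]
    exact Finset.sum_congr rfl fun _ _ => Finset.sum_congr rfl fun _ _ => by ring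
  have hnum : ∑ u, f u * Z u = Fintype.card Γ * ∑ θ, fhat θ * S θ := by
    rw [hpair, Finset.mul_sum]
    refine Finset.sum_congr rfl fun θ _ => ?_
    rw [hfhat]
    field_simp
  have hden : ∑ u, Z u = Fintype.card Γ * S 1 := by
    have h1 := hpair 1
    simp only [Pi.one_apply, one_mul, sum_units_apply_inv_eq_ite] at h1
    rw [h1, Finset.sum_eq_single_of_mem 1 (Finset.mem_univ _) fun θ _ hθ => by simp [hθ]]
    simp [mul_comm]
  rw [hnum, hden, mul_div_mul_left _ _ hcard, finsum_eq_sum_of_fintype]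

/-- The paper's Corollary on the expected topological type of a random bundle: with
`Z(u) = ∑'_μ w(μ) λ(μ)(u⁻¹)`, `S_θ = ∑'_{μ : λ(μ) = θ} w(μ)`, and Fourier coefficients
`f̂(θ) = (1/|Γ|) ∑_u f(u) θ(u⁻¹)`, if `S_𝟙 ≠ 0` then
`(∑_u f(u) Z(u)) / (∑_u Z(u)) = (∑_θ f̂(θ) S_θ) / S_𝟙`. -/
theorem expected_topological_type
    {Γ : Type*} [CommGroup Γ] [Fintype Γ]
    {I : Type*} (w : I → ℂ) (hw : Summable w)
    (lam : I → (Γ →* ℂˣ))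
    (Z : Γ → ℂ)
    (hZ : ∀ u : Γ, Z u = ∑' μ : I, w μ * ((lam μ) u⁻¹ : ℂ))
    (S : (Γ →* ℂˣ) → ℂ)
    (hS : ∀ θ : Γ →* ℂˣ, S θ = ∑' μ : {μ : I // lam μ = θ}, w μ.val)
    (f : Γ → ℂ)
    (fhat : (Γ →* ℂˣ) → ℂ)
    (hfhat : ∀ θ : Γ →* ℂˣ,
      fhat θ = (1 / (Fintype.card Γ : ℂ)) * ∑ u : Γ, f u * (θ u⁻¹ : ℂ))
    (hS1 : S 1 ≠ 0) :
    (∑ u : Γ, f u * Z u) / (∑ u : Γ, Z u) =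
      (∑ᶠ θ : Γ →* ℂˣ, fhat θ * S θ) / S 1 :=
  expected_topological_type_general w hw lam Z hZ S hS f fhat hfhat
end
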